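/- arXiv:2006.07886 — 5 statements merged into one kernel-verified Lean document; each statement's English description precedes it below -/
import Mathlib

section
/- Suppose f*: ℝⁿ → ℝⁿ is a diffeomorphism transporting a density p*(c) into a factorized density p(z) = ∏ᵢ p(zᵢ) (i.e., p*(c) = p(f*(c))|det ∇f*(c)|). If p*(c) does not factorize into a product of univariate functions, then the Jacobian ∇f*(c) cannot be diagonal up to a fixed permutation at all points c. -/
open Function

/-- If all partial derivatives of `g` except possibly the `j`-th vanish everywhere,
then `g c` depends only on `c j`. -/
private lemma indep_of_partials {n : ℕ} (g : (Fin n → ℝ) → ℝ) (hg : Differentiable ℝ g)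
    (j : Fin n) (hzero : ∀ (x : Fin n → ℝ) (k : Fin n), k ≠ j → fderiv ℝ g x (Pi.single k 1) = 0) :
    ∀ c c' : Fin n → ℝ, c j = c' j → g c = g c' := by
  classical
  have step : ∀ (k : Fin n), k ≠ j → ∀ (x : Fin n → ℝ) (a : ℝ),
      g (Function.update x k a) = g x := by
    intro k hk x a
    have hder : ∀ t : ℝ, HasDerivAt (fun t => g (Function.update x k t))
        (fderiv ℝ g (Function.update x k t) (Pi.single k 1)) t := by
      intro t
      exact (hg _).hasFDerivAt.comp_hasDerivAt t (hasDerivAt_update x k t)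
    have hconst : ∀ s t : ℝ, g (Function.update x k s) = g (Function.update x k t) := by
      intro s t
      apply is_const_of_deriv_eq_zero (fun u => (hder u).differentiableAt)
      intro u
      rw [(hder u).deriv, hzero _ k hk]
    calc g (Function.update x k a) = g (Function.update x k (x k)) := hconst a (x k)
      _ = g x := by rw [Function.update_eq_self]
  intro c c' hcc
  have key : ∀ s : Finset (Fin n), g c = g (fun k => if k ∈ s then c' k else c k) := by
    intro s
    induction s using Finset.induction_on with
    | empty => simp
    | @insert k s hk ih =>
      have hfun : (fun k' => if k' ∈ insert k s then c' k' else c k')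
          = Function.update (fun k' => if k' ∈ s then c' k' else c k') k (c' k) := by
        funext k'
        by_cases h : k' = k
        · subst h; simp
        · simp [Function.update_apply, h, Finset.mem_insert]
      rw [hfun]
      by_cases hkj : k = j
      · subst hkj
        have hval : c' k = (fun k' => if k' ∈ s then c' k' else c k') k := by
          by_cases h : k ∈ s <;> simp [h, hcc]
        rw [hval, Function.update_eq_self]
        exact ih
      · rw [step k hkj]
        exact ih
  have := key Finset.univ
  simpa using this

/-- suppose the diffeomorphism `f*` transports a smooth positive density `p*`
into a factorized smooth positive density `p(z) = ∏ᵢ pᵢ(zᵢ)`, in the sense that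
`p*(c) = p(f*(c)) |det ∇f*(c)|`. If `p*` does not factorize into a product of univariate
functions, then there is no fixed permutation `σ` making the Jacobian `∇f*(c)` σ-diagonal
at all points `c`. -/
theorem no_sigma_diagonal_jacobian_of_not_factorized {n : ℕ}
    (fstar : (Fin n → ℝ) → (Fin n → ℝ))
    (hf : ContDiff ℝ (⊤ : ℕ∞) fstar) (hbij : Function.Bijective fstar)
    (hinv : ContDiff ℝ (⊤ : ℕ∞) (Function.invFun fstar))
    (pstar : (Fin n → ℝ) → ℝ) (p : Fin n → ℝ → ℝ)
    (hpstar_smooth : ContDiff ℝ (⊤ : ℕ∞) pstar) (hpstar_pos : ∀ c, 0 < pstar c)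
    (hp_smooth : ∀ i, ContDiff ℝ (⊤ : ℕ∞) (p i)) (hp_pos : ∀ i x, 0 < p i x)
    (htransport : ∀ c, pstar c = (∏ i, p i (fstar c i)) * |(fderiv ℝ fstar c).det|)
    (hnofact : ¬ ∃ q : Fin n → ℝ → ℝ, ∀ c : Fin n → ℝ, pstar c = ∏ i, q i (c i)) :
    ¬ ∃ σ : Equiv.Perm (Fin n), ∀ (c : Fin n → ℝ) (i j : Fin n), i ≠ σ j →
      fderiv ℝ fstar c (Pi.single j 1) i = 0 := by
  classical
  rintro ⟨σ, hdiag⟩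
  have hfd : Differentiable ℝ fstar := hf.differentiable (by simp)
  -- the components of fstar, as functions of a single variable
  set h : Fin n → ℝ → ℝ := fun j t => fstar (Pi.single j t) (σ j) with hh
  -- auxiliary: differentiability and fderiv of the (σ j)-th component
  have hgd : ∀ j : Fin n, Differentiable ℝ (fun y : Fin n → ℝ => fstar y (σ j)) := by
    intro j
    exact ((ContinuousLinearMap.proj (σ j) : ((Fin n → ℝ)) →L[ℝ] ℝ)).differentiable.comp hfd
  have hgfd : ∀ (j : Fin n) (x : Fin n → ℝ) (v : Fin n → ℝ),
      fderiv ℝ (fun y : Fin n → ℝ => fstar y (σ j)) x v = fderiv ℝ fstar x v (σ j) := by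
    intro j x v
    have h1 : HasFDerivAt (fun y : Fin n → ℝ => fstar y (σ j))
        ((ContinuousLinearMap.proj (σ j) : ((Fin n → ℝ)) →L[ℝ] ℝ).comp (fderiv ℝ fstar x)) x :=
      ((ContinuousLinearMap.proj (σ j) : ((Fin n → ℝ)) →L[ℝ] ℝ).hasFDerivAt).comp x
        (hfd x).hasFDerivAt
    rw [h1.fderiv]
    rfl
  -- each component depends only on one coordinate
  have hcomp : ∀ (j : Fin n) (x : Fin n → ℝ), fstar x (σ j) = h j (x j) := by
    intro j x
    have := indep_of_partials (fun y : Fin n → ℝ => fstar y (σ j)) (hgd j) j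
      (fun x k hk => by
        rw [hgfd]
        exact hdiag x (σ j) k (fun hc => hk (σ.injective hc.symm)))
      x (Pi.single j (x j)) (by simp)
    simpa [hh] using this
  -- the derivative of h j
  have hder : ∀ (j : Fin n) (x : Fin n → ℝ),
      HasDerivAt (h j) (fderiv ℝ fstar x (Pi.single j 1) (σ j)) (x j) := by
    intro j x
    have h1 : HasDerivAt (fun t => fstar (Function.update x j t))
        (fderiv ℝ fstar x (Pi.single j 1)) (x j) := by
      have := (hfd (Function.update x j (x j))).hasFDerivAt.comp_hasDerivAt (x j)
        (hasDerivAt_update x j (x j))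
      simpa [Function.update_eq_self, Function.comp_def] using this
    have h2 : HasDerivAt (fun t => fstar (Function.update x j t) (σ j))
        (fderiv ℝ fstar x (Pi.single j 1) (σ j)) (x j) := (hasDerivAt_pi.mp h1) (σ j)
    have h3 : (fun t => fstar (Function.update x j t) (σ j)) = h j := by
      funext t
      rw [hcomp j (Function.update x j t)]
      simp
    rwa [h3] at h2
  -- the diagonal entries depend only on one coordinate
  set e : Fin n → ℝ → ℝ := fun j t => fderiv ℝ fstar (Pi.single j t) (Pi.single j 1) (σ j)
    with he
  have hder_e : ∀ (j : Fin n) (x : Fin n → ℝ),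
      fderiv ℝ fstar x (Pi.single j 1) (σ j) = e j (x j) := by
    intro j x
    have h1 := hder j x
    have h2 := hder j (Pi.single j (x j))
    simp only [Pi.single_eq_same] at h2
    exact h1.unique h2
  -- compute the determinant
  have hdet : ∀ c : Fin n → ℝ, (fderiv ℝ fstar c).det
      = ((Equiv.Perm.sign σ.symm : ℤ) : ℝ) * ∏ j, e j (c j) := by
    intro c
    have hM : LinearMap.toMatrix' ((fderiv ℝ fstar c) : (Fin n → ℝ) →ₗ[ℝ] (Fin n → ℝ))
        = (Matrix.diagonal (fun j => e j (c j))).submatrix σ.symm id := by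
      ext i j
      rw [LinearMap.toMatrix'_apply]
      have hsingle : (fun j' => if j' = j then (1 : ℝ) else 0) = Pi.single j 1 := by
        funext j'
        simp [Pi.single_apply]
      by_cases hij : i = σ j
      · subst hij
        have : σ.symm (σ j) = j := σ.symm_apply_apply j
        simp only [ContinuousLinearMap.coe_coe, Matrix.submatrix_apply, id_eq, this,
          Matrix.diagonal_apply_eq]
        exact hder_e j c
      · have hne : σ.symm i ≠ j := fun hc => hij (by rw [← hc, σ.apply_symm_apply])
        simp only [ContinuousLinearMap.coe_coe, Matrix.submatrix_apply, id_eq,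
          Matrix.diagonal_apply_ne _ hne]
        exact hdiag c i j hij
    have h0 : (fderiv ℝ fstar c).det
        = LinearMap.det ((fderiv ℝ fstar c) : (Fin n → ℝ) →ₗ[ℝ] (Fin n → ℝ)) := rfl
    rw [h0, ← LinearMap.det_toMatrix', hM, Matrix.det_permute, Matrix.det_diagonal]
  -- hence pstar factorizes, contradiction
  refine hnofact ⟨fun j t => p (σ j) (h j t) * |e j t|, fun c => ?_⟩
  have habs : |(fderiv ℝ fstar c).det| = ∏ j, |e j (c j)| := by
    rw [hdet c, abs_mul, ← Finset.abs_prod]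
    rcases Int.units_eq_one_or (Equiv.Perm.sign σ.symm) with hs | hs <;> rw [hs] <;> norm_num
  have hprod : ∏ i, p i (fstar c i) = ∏ j, p (σ j) (h j (c j)) := by
    rw [← Equiv.prod_comp σ (fun i => p i (fstar c i))]
    exact Finset.prod_congr rfl fun j _ => by rw [hcomp]
  rw [htransport c, hprod, habs, ← Finset.prod_mul_distrib]
end

section
/- Let σ be a permutation of {1,…,n} and f: ℝⁿ → ℝⁿ a diffeomorphism such that ∂fᵢ/∂c_j ≡ 0 whenever i ≠ σ(j). Then f has the form f(c)_{σ(j)} = g_j(c_j) for univariate diffeomorphisms g_j, and consequently f maps product densities to product densities under the change-of-variables formula. -/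
open Function

/-- if `f` is a diffeomorphism of `ℝⁿ` with `∂fᵢ/∂c_j ≡ 0` whenever `i ≠ σ(j)`
for a fixed permutation `σ`, then `f(c)_{σ(j)} = g_j(c_j)` for univariate diffeomorphisms
`g_j`, and consequently `f` maps product densities to product densities under the
change-of-variables formula `p_Z(z) = p_C(f⁻¹(z)) |det ∇f⁻¹(z)|`. -/
theorem sigma_diagonal_jacobian_structure {n : ℕ}
    (σ : Equiv.Perm (Fin n))
    (f : (Fin n → ℝ) → (Fin n → ℝ))
    (hf : ContDiff ℝ (⊤ : ℕ∞) f) (hbij : Function.Bijective f)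
    (hinv : ContDiff ℝ (⊤ : ℕ∞) (Function.invFun f))
    (hdiag : ∀ (c : Fin n → ℝ) (i j : Fin n), i ≠ σ j →
      fderiv ℝ f c (Pi.single j 1) i = 0) :
    ∃ g : Fin n → ℝ → ℝ,
      (∀ j, ContDiff ℝ (⊤ : ℕ∞) (g j) ∧ Function.Bijective (g j) ∧
        ContDiff ℝ (⊤ : ℕ∞) (Function.invFun (g j))) ∧
      (∀ (c : Fin n → ℝ) (j : Fin n), f c (σ j) = g j (c j)) ∧
      (∀ (q : Fin n → ℝ → ℝ) (pC pZ : (Fin n → ℝ) → ℝ),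
        (∀ c, pC c = ∏ j, q j (c j)) →
        (∀ z, pZ z = pC (Function.invFun f z) * |(fderiv ℝ (Function.invFun f) z).det|) →
        ∃ r : Fin n → ℝ → ℝ, ∀ z, pZ z = ∏ j, r j (z j)) := by
  have hfd : Differentiable ℝ f := hf.differentiable (by simp)
  have hri : Function.RightInverse (invFun f) f := Function.rightInverse_invFun hbij.2
  have hcomp : ∀ (c : Fin n → ℝ) (i : Fin n),
      HasFDerivAt (fun c => f c i) ((ContinuousLinearMap.proj i).comp (fderiv ℝ f c)) c := by
    intro c i
    have h1 : HasFDerivAt (⇑(ContinuousLinearMap.proj i : (Fin n → ℝ) →L[ℝ] ℝ) ∘ f)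
        ((ContinuousLinearMap.proj i).comp (fderiv ℝ f c)) c :=
      (ContinuousLinearMap.proj i : (Fin n → ℝ) →L[ℝ] ℝ).hasFDerivAt.comp c (hfd c).hasFDerivAt
    exact h1
  -- constancy in coordinates other than j
  have hupdate : ∀ (j k : Fin n), k ≠ j → ∀ (c : Fin n → ℝ) (t : ℝ),
      f (Function.update c k t) (σ j) = f c (σ j) := by
    intro j k hkj c t
    have hdir : ∀ s : ℝ, HasDerivAt (fun t => Function.update c k t) (Pi.single k 1) s := by
      intro s
      rw [hasDerivAt_pi]
      intro m
      rcases eq_or_ne m k with rfl | hm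
      · simpa using (hasDerivAt_id' s)
      · simpa [Function.update_apply, hm, Pi.single_apply] using
          (hasDerivAt_const s (c m))
    have hφ : ∀ t : ℝ, HasDerivAt (fun t => f (Function.update c k t) (σ j))
        (fderiv ℝ f (Function.update c k t) (Pi.single k 1) (σ j)) t := by
      intro t
      exact (hcomp (Function.update c k t) (σ j)).comp_hasDerivAt t (hdir t)
    have hzero : ∀ t : ℝ, deriv (fun t => f (Function.update c k t) (σ j)) t = 0 := by
      intro t
      rw [(hφ t).deriv]
      exact hdiag _ (σ j) k (fun h => hkj (σ.injective h).symm)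
    have := is_const_of_deriv_eq_zero (fun t => (hφ t).differentiableAt) hzero t (c k)
    simpa [Function.update_eq_self] using this
  -- f c (σ j) depends only on c j
  have hdep : ∀ (j : Fin n) (c c' : Fin n → ℝ), c j = c' j → f c (σ j) = f c' (σ j) := by
    intro j c c' hcc
    have key : ∀ s : Finset (Fin n), j ∉ s →
        f (fun m => if m ∈ s then c' m else c m) (σ j) = f c (σ j) := by
      intro s
      induction s using Finset.induction_on with
      | empty => simp
      | @insert k s hk ih =>
        intro hj
        have hkj : k ≠ j := fun h => hj (h ▸ Finset.mem_insert_self k s)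
        have hjs : j ∉ s := fun h => hj (Finset.mem_insert_of_mem h)
        have heq : (fun m => if m ∈ insert k s then c' m else c m)
            = Function.update (fun m => if m ∈ s then c' m else c m) k (c' k) := by
          funext m
          rcases eq_or_ne m k with rfl | hm
          · simp
          · simp [Function.update_apply, hm, Finset.mem_insert]
        rw [heq, hupdate j k hkj, ih hjs]
    have h1 := key (Finset.univ.erase j) (by simp)
    have he : (fun m => if m ∈ Finset.univ.erase j then c' m else c m) = c' := by
      funext m
      rcases eq_or_ne m j with rfl | hm
      · simp [hcc]
      · simp [hm]
    rw [he] at h1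
    exact h1.symm
  -- define g
  set g : Fin n → ℝ → ℝ := fun j t => f (Function.update (0 : Fin n → ℝ) j t) (σ j) with hg
  have hgf : ∀ (c : Fin n → ℝ) (j : Fin n), f c (σ j) = g j (c j) := by
    intro c j
    exact hdep j c (Function.update 0 j (c j)) (by simp)
  have hgc : ∀ j, ContDiff ℝ (⊤ : ℕ∞) (g j) := by
    intro j
    exact (contDiff_pi.mp hf (σ j)).comp (contDiff_update (⊤ : ℕ∞) (0 : Fin n → ℝ) j)
  have hginj : ∀ j, Function.Injective (g j) := by
    intro j a b hab
    have hfe : f (Function.update (0 : Fin n → ℝ) j a) = f (Function.update (0 : Fin n → ℝ) j b) := by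
      funext i
      have hi : i = σ (σ.symm i) := (σ.apply_symm_apply i).symm
      rw [hi, hgf, hgf]
      rcases eq_or_ne (σ.symm i) j with h | h
      · rw [h]; simpa using hab
      · simp [Function.update_apply, h]
    have := hbij.1 hfe
    have := congrFun this j
    simpa using this
  have hgsurj : ∀ j, Function.Surjective (g j) := by
    intro j y
    obtain ⟨c, hc⟩ := hbij.2 (Function.update (f 0) (σ j) y)
    refine ⟨c j, ?_⟩
    rw [← hgf]
    rw [hc]
    simp
  -- explicit inverse h
  set h : Fin n → ℝ → ℝ := fun j y => invFun f (Function.update (f 0) (σ j) y) j with hh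
  have hhc : ∀ j, ContDiff ℝ (⊤ : ℕ∞) (h j) := by
    intro j
    have : ContDiff ℝ (⊤ : ℕ∞) (fun y => invFun f (Function.update (f 0) (σ j) y)) :=
      hinv.comp (contDiff_update (⊤ : ℕ∞) (f 0) (σ j))
    exact contDiff_pi.mp this j
  have hgr : ∀ j y, g j (h j y) = y := by
    intro j y
    have := hgf (invFun f (Function.update (f 0) (σ j) y)) j
    rw [← this, hri]
    simp
  have hinvg : ∀ j, Function.invFun (g j) = h j := by
    intro j
    funext y
    apply hginj j
    rw [hgr, Function.rightInverse_invFun (hgsurj j) y]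
  -- invFun f componentwise
  have hinvf : ∀ (z : Fin n → ℝ) (j : Fin n), invFun f z j = h j (z (σ j)) := by
    intro z j
    apply hginj j
    rw [hgr, ← hgf, hri]
  refine ⟨g, fun j => ⟨hgc j, ⟨hginj j, hgsurj j⟩, by rw [hinvg j]; exact hhc j⟩, hgf, ?_⟩
  -- density part
  intro q pC pZ hpC hpZ
  set d : Fin n → ℝ → ℝ := fun j => deriv (h j) with hd
  have hde : ∀ j y, HasDerivAt (h j) (d j y) y :=
    fun j y => (((hhc j).differentiable (by simp)) y).hasDerivAt
  have hco : invFun f = fun z j => h j (z (σ j)) := funext fun z => funext fun j => hinvf z j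
  have hF : ∀ z : Fin n → ℝ, HasFDerivAt (invFun f)
      ((ContinuousLinearMap.pi fun j =>
        d j (z (σ j)) • ContinuousLinearMap.proj (σ j) :
          (Fin n → ℝ) →L[ℝ] (Fin n → ℝ))) z := by
    intro z
    rw [hco]
    apply hasFDerivAt_pi.mpr
    intro j
    exact (hde j (z (σ j))).comp_hasFDerivAt z ((ContinuousLinearMap.proj (σ j) : (Fin n → ℝ) →L[ℝ] ℝ).hasFDerivAt)
  have hdet : ∀ z : Fin n → ℝ, |(fderiv ℝ (invFun f) z).det| = ∏ j, |d j (z (σ j))| := by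
    intro z
    rw [(hF z).fderiv]
    set L := (ContinuousLinearMap.pi fun j =>
        d j (z (σ j)) • ContinuousLinearMap.proj (σ j) : (Fin n → ℝ) →L[ℝ] (Fin n → ℝ))
    have hL : ContinuousLinearMap.det L = LinearMap.det (L : (Fin n → ℝ) →ₗ[ℝ] (Fin n → ℝ)) := rfl
    have hM : LinearMap.toMatrix' (L : (Fin n → ℝ) →ₗ[ℝ] (Fin n → ℝ))
        = Matrix.diagonal (fun j => d j (z (σ j))) * σ.permMatrix ℝ := by
      ext i j
      rw [LinearMap.toMatrix'_apply]
      simp only [Matrix.diagonal_mul, Equiv.Perm.permMatrix, PEquiv.toMatrix_apply,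
        Equiv.toPEquiv_apply, Option.mem_def, Option.some.injEq,
        ContinuousLinearMap.coe_coe, L, ContinuousLinearMap.pi_apply,
        ContinuousLinearMap.smul_apply, ContinuousLinearMap.proj_apply, smul_eq_mul, Pi.single_apply]
    have : LinearMap.det (L : (Fin n → ℝ) →ₗ[ℝ] (Fin n → ℝ))
        = (∏ j, d j (z (σ j))) * ((Equiv.Perm.sign σ : ℤ) : ℝ) := by
      rw [← LinearMap.det_toMatrix', hM, Matrix.det_mul, Matrix.det_diagonal,
        Matrix.det_permutation]
    rw [hL, this, abs_mul, Finset.abs_prod]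
    rcases Int.units_eq_one_or (Equiv.Perm.sign σ) with hs | hs <;> simp [hs]
  refine ⟨fun i t => q (σ.symm i) (h (σ.symm i) t) * |d (σ.symm i) t|, ?_⟩
  intro z
  rw [hpZ z, hpC, hdet]
  have h1 : (∏ j, q j (invFun f z j)) = ∏ j, q j (h j (z (σ j))) := by
    apply Finset.prod_congr rfl
    intro j _
    rw [hinvf]
  rw [h1, ← Finset.prod_mul_distrib]
  rw [← Equiv.prod_comp σ (fun i => q (σ.symm i) (h (σ.symm i) (z i)) * |d (σ.symm i) (z i)|)]
  apply Finset.prod_congr rfl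
  intro j _
  simp
end

section
/- Let (C₁, C₂) have joint density proportional to exp(−(c₁ − α c₂)²/(2σ²)) on [0,a]×[0,b] with α = b/a > 0. Then the mutual information I(C₁; C₂) is strictly positive, and I(C₁;C₂) → 0 as σ → ∞. -/
/-!
Let `g` be the density of the joint law `P` with respect to the uniform distribution
`λ₁ ⊗ λ₂` on the rectangle. There `|c₁ - α c₂| ≤ a + α b`, so `g` takes values in `[L, U]` with
`U / L = exp ((a + α b)² / (2σ²))`. The product of the marginals then has density in `[L², U²]`,
so `P` and `P₁ ⊗ P₂` are within a factor `(U / L)²` of each other, and the log-likelihood ratio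
is bounded by `2 log (U / L) = (a + α b)² / σ²`, which tends to `0`.

Positivity is Gibbs' inequality with its equality case: `P = P₁ ⊗ P₂` would force
`g (x, y) = u x * v y` almost everywhere, whereas
`g (x₁, y₁) g (x₂, y₂) = g (x₁, y₂) g (x₂, y₁) exp (α (x₁ - x₂) (y₁ - y₂) / σ²)`.
-/

open MeasureTheory Real Filter

open Classical in
/-- Kullback–Leibler divergence: `∫ log (dμ/dν) dμ` if `μ ≪ ν`, and `+∞` otherwise. -/
noncomputable def klDiv {α : Type*} [MeasurableSpace α] (μ ν : Measure α) : EReal :=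
  if μ ≪ ν then ((∫ x, Real.log ((μ.rnDeriv ν x).toReal) ∂μ : ℝ) : EReal) else ⊤

/-- Mutual information `I(C₁;C₂) = D_KL(p_{C₁,C₂} ‖ p_{C₁} ⊗ p_{C₂})`. -/
noncomputable def mutualInfo (μ : Measure (ℝ × ℝ)) : EReal :=
  klDiv μ ((μ.map Prod.fst).prod (μ.map Prod.snd))

open Set ProbabilityTheory
open scoped ENNReal

section LogLikelihoodRatio

variable {α : Type*} [MeasurableSpace α] {μ ν : Measure α}

lemma rnDeriv_le_of_le_smul [SigmaFinite ν] {c : ℝ≥0∞} (h : μ ≤ c • ν) :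
    μ.rnDeriv ν ≤ᵐ[ν] fun _ ↦ c := by
  refine ae_le_of_forall_setLIntegral_le_of_sigmaFinite (μ.measurable_rnDeriv ν) fun s _ _ ↦ ?_
  rw [setLIntegral_const]
  exact (Measure.setLIntegral_rnDeriv_le s).trans (h s)

lemma le_smul_of_le_smul_of_smul_le {ρ : Measure α} {a b : ℝ} (hb : 0 < b)
    (hμ : μ ≤ ENNReal.ofReal a • ρ) (hν : ENNReal.ofReal b • ρ ≤ ν) :
    μ ≤ ENNReal.ofReal (a / b) • ν :=
  calc μ ≤ ENNReal.ofReal a • ρ := hμ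
    _ = ENNReal.ofReal (a / b) • ENNReal.ofReal b • ρ := by
      rw [smul_smul, ← ENNReal.ofReal_mul' hb.le, div_mul_cancel₀ a hb.ne']
    _ ≤ ENNReal.ofReal (a / b) • ν := by gcongr

lemma abs_llr_le_log_of_le_smul [SigmaFinite μ] [SigmaFinite ν] {c : ℝ}
    (hμν : μ ≤ ENNReal.ofReal c • ν) (hνμ : ν ≤ ENNReal.ofReal c • μ) :
    ∀ᵐ x ∂μ, |llr μ ν x| ≤ log c := by
  have hac : μ ≪ ν := Measure.absolutelyContinuous_of_le_smul hμν
  filter_upwards [hac.ae_le (rnDeriv_le_of_le_smul hμν), rnDeriv_le_of_le_smul hνμ,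
    Measure.inv_rnDeriv hac, Measure.rnDeriv_pos hac, hac.ae_le (Measure.rnDeriv_lt_top μ ν)]
    with x hle hinv_le hinv hpos hfin
  have hr : 0 < (μ.rnDeriv ν x).toReal := ENNReal.toReal_pos hpos.ne' hfin.ne
  have hc : 0 < c := ENNReal.ofReal_pos.1 (hpos.trans_le hle)
  have hr_le : (μ.rnDeriv ν x).toReal ≤ c := ENNReal.toReal_le_of_le_ofReal hc.le hle
  have hr_inv_le : (μ.rnDeriv ν x).toReal⁻¹ ≤ c := by
    rw [← ENNReal.toReal_inv]
    exact ENNReal.toReal_le_of_le_ofReal hc.le (hinv.trans_le hinv_le)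
  rw [llr, abs_le, neg_le, ← log_inv]
  exact ⟨log_le_log (inv_pos.2 hr) hr_inv_le, log_le_log hr hr_le⟩

lemma integral_llr_pos_of_ne [IsProbabilityMeasure μ] [IsProbabilityMeasure ν] (hac : μ ≪ ν)
    (hint : Integrable (llr μ ν) μ) (hne : μ ≠ ν) :
    0 < ∫ x, llr μ ν x ∂μ := by
  rw [← InformationTheory.toReal_klDiv_of_measure_eq hac (by simp)]
  exact ENNReal.toReal_pos (InformationTheory.klDiv_eq_zero_iff.not.2 hne)
    (InformationTheory.klDiv_ne_top hac hint)

lemma klDiv_pos_and_le_log_of_le_smul [IsProbabilityMeasure μ] [IsProbabilityMeasure ν] {c : ℝ}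
    (hμν : μ ≤ ENNReal.ofReal c • ν) (hνμ : ν ≤ ENNReal.ofReal c • μ) (hne : μ ≠ ν) :
    0 < klDiv μ ν ∧ klDiv μ ν ≤ (log c : ℝ) := by
  have hac : μ ≪ ν := Measure.absolutelyContinuous_of_le_smul hμν
  have hbound := abs_llr_le_log_of_le_smul hμν hνμ
  have hint : Integrable (llr μ ν) μ :=
    (integrable_const (log c)).mono' (measurable_llr μ ν).aestronglyMeasurable hbound
  have hle : ∫ x, llr μ ν x ∂μ ≤ log c := by
    simpa using integral_mono_ae hint (integrable_const (log c))
      (hbound.mono fun x hx ↦ (le_abs_self _).trans hx)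
  rw [klDiv, if_pos hac]
  exact ⟨EReal.coe_pos.2 (integral_llr_pos_of_ne hac hint hne), EReal.coe_le_coe_iff.2 hle⟩

end LogLikelihoodRatio

section Product

variable {α β : Type*} [MeasurableSpace α] [MeasurableSpace β]
  {ρ₁ : Measure α} {ρ₂ : Measure β} [IsProbabilityMeasure ρ₁] [IsProbabilityMeasure ρ₂]
  {m : Measure (α × β)}

lemma prod_map_le_smul_prod {c : ℝ≥0∞} (h : m ≤ c • ρ₁.prod ρ₂) :
    (m.map Prod.fst).prod (m.map Prod.snd) ≤ (c * c) • ρ₁.prod ρ₂ := by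
  have h₁ : m.map Prod.fst ≤ c • ρ₁ := by
    simpa using Measure.map_mono h measurable_fst
  have h₂ : m.map Prod.snd ≤ c • ρ₂ := by
    simpa using Measure.map_mono h measurable_snd
  calc (m.map Prod.fst).prod (m.map Prod.snd) ≤ (c • ρ₁).prod (c • ρ₂) := Measure.prod_mono h₁ h₂
    _ = (c * c) • ρ₁.prod ρ₂ := by
      rw [Measure.prod_smul_left, Measure.prod_smul_right, smul_smul]

lemma smul_prod_le_prod_map [SFinite m] {c : ℝ≥0∞} (h : c • ρ₁.prod ρ₂ ≤ m) :
    (c * c) • ρ₁.prod ρ₂ ≤ (m.map Prod.fst).prod (m.map Prod.snd) := by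
  have h₁ : c • ρ₁ ≤ m.map Prod.fst := by
    simpa using Measure.map_mono h measurable_fst
  have h₂ : c • ρ₂ ≤ m.map Prod.snd := by
    simpa using Measure.map_mono h measurable_snd
  calc (c * c) • ρ₁.prod ρ₂ = (c • ρ₁).prod (c • ρ₂) := by
        rw [Measure.prod_smul_left, Measure.prod_smul_right, smul_smul]
    _ ≤ (m.map Prod.fst).prod (m.map Prod.snd) := Measure.prod_mono h₁ h₂

lemma le_smul_prod_map_and_prod_map_le_smul [IsProbabilityMeasure m] {L U : ℝ} (hL : 0 < L)
    (hLm : ENNReal.ofReal L • ρ₁.prod ρ₂ ≤ m) (hmU : m ≤ ENNReal.ofReal U • ρ₁.prod ρ₂) :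
    m ≤ ENNReal.ofReal ((U / L) ^ 2) • (m.map Prod.fst).prod (m.map Prod.snd) ∧
      (m.map Prod.fst).prod (m.map Prod.snd) ≤ ENNReal.ofReal ((U / L) ^ 2) • m := by
  have hL1 : L ≤ 1 := by simpa using hLm univ
  have hU1 : 1 ≤ U := by simpa using hmU univ
  have hν_le := prod_map_le_smul_prod hmU
  have hle_ν := smul_prod_le_prod_map hLm
  rw [← ENNReal.ofReal_mul (by linarith)] at hν_le
  rw [← ENNReal.ofReal_mul hL.le] at hle_ν
  constructor
  · calc m ≤ ENNReal.ofReal (U / (L * L)) • (m.map Prod.fst).prod (m.map Prod.snd) :=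
          le_smul_of_le_smul_of_smul_le (by positivity) hmU hle_ν
      _ ≤ _ := by
        gcongr
        rw [div_pow, sq, sq]
        gcongr
        nlinarith
  · calc (m.map Prod.fst).prod (m.map Prod.snd) ≤ ENNReal.ofReal (U * U / L) • m :=
          le_smul_of_le_smul_of_smul_le hL hν_le hLm
      _ ≤ _ := by
        gcongr
        rw [div_pow, sq, sq]
        gcongr
        nlinarith

end Product

section Density

variable {α β : Type*} [MeasurableSpace α] [MeasurableSpace β]
  {ρ₁ : Measure α} {ρ₂ : Measure β}

lemma map_fst_withDensity_prod [SFinite ρ₁] [SFinite ρ₂] {g : α × β → ℝ≥0∞} (hg : Measurable g) :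
    ((ρ₁.prod ρ₂).withDensity g).map Prod.fst = ρ₁.withDensity fun x ↦ ∫⁻ y, g (x, y) ∂ρ₂ := by
  ext s hs
  rw [Measure.map_apply measurable_fst hs, withDensity_apply _ hs, ← prod_univ,
    withDensity_apply _ (hs.prod MeasurableSet.univ), ← Measure.prod_restrict,
    Measure.restrict_univ, lintegral_prod _ hg.aemeasurable]

lemma map_snd_withDensity_prod [SFinite ρ₁] [SFinite ρ₂] {g : α × β → ℝ≥0∞}
    (hg : Measurable g) :
    ((ρ₁.prod ρ₂).withDensity g).map Prod.snd = ρ₂.withDensity fun y ↦ ∫⁻ x, g (x, y) ∂ρ₁ := by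
  ext s hs
  rw [Measure.map_apply measurable_snd hs, withDensity_apply _ hs, ← univ_prod,
    withDensity_apply _ (MeasurableSet.univ.prod hs), ← Measure.prod_restrict,
    Measure.restrict_univ, lintegral_prod_symm _ hg.aemeasurable]

lemma exists_ae_eq_mul_of_withDensity_eq_prod_map [SigmaFinite ρ₁] [SigmaFinite ρ₂]
    {g : α × β → ℝ≥0∞} (hg : Measurable g)
    (h : (ρ₁.prod ρ₂).withDensity g = (((ρ₁.prod ρ₂).withDensity g).map Prod.fst).prod
      (((ρ₁.prod ρ₂).withDensity g).map Prod.snd)) :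
    ∃ (u : α → ℝ≥0∞) (v : β → ℝ≥0∞), g =ᵐ[ρ₁.prod ρ₂] fun p ↦ u p.1 * v p.2 := by
  rw [map_fst_withDensity_prod hg, map_snd_withDensity_prod hg,
    prod_withDensity hg.lintegral_prod_right' hg.lintegral_prod_left'] at h
  exact ⟨fun x ↦ ∫⁻ y, g (x, y) ∂ρ₂, fun y ↦ ∫⁻ x, g (x, y) ∂ρ₁,
    (withDensity_eq_iff_of_sigmaFinite hg.aemeasurable (by fun_prop)).1 h⟩

lemma exists_ne_of_ae [NullSingletonClass ρ₁] (hρ : ρ₁ ≠ 0) {P : α → Prop} (h : ∀ᵐ x ∂ρ₁, P x) :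
    ∃ x₁ x₂, x₁ ≠ x₂ ∧ P x₁ ∧ P x₂ := by
  by_contra! hP
  have hsub : {x | P x}.Subsingleton := fun x hx y hy ↦ by_contra fun hxy ↦ hP x y hxy hx hy
  have hnot : ∀ᵐ x ∂ρ₁, ¬ P x := measure_eq_zero_iff_ae_notMem.1 (hsub.measure_zero ρ₁)
  exact hρ (ae_eq_bot.1 (eventually_false_iff_eq_bot.1
    ((h.and hnot).mono fun x hx ↦ hx.2 hx.1)))

lemma exists_cross_eq_of_ae_eq_mul {M : Type*} [CommMonoid M] [SFinite ρ₂] [NullSingletonClass ρ₁]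
    [NullSingletonClass ρ₂] (hρ₁ : ρ₁ ≠ 0) (hρ₂ : ρ₂ ≠ 0) {G : α × β → M} {u : α → M} {v : β → M}
    (h : G =ᵐ[ρ₁.prod ρ₂] fun p ↦ u p.1 * v p.2) :
    ∃ x₁ x₂ y₁ y₂, x₁ ≠ x₂ ∧ y₁ ≠ y₂ ∧ G (x₁, y₁) * G (x₂, y₂) = G (x₁, y₂) * G (x₂, y₁) := by
  obtain ⟨x₁, x₂, hx, hx₁, hx₂⟩ := exists_ne_of_ae hρ₁ (Measure.ae_ae_of_ae_prod h)
  obtain ⟨y₁, y₂, hy, ⟨h₁₁, h₂₁⟩, h₁₂, h₂₂⟩ := exists_ne_of_ae hρ₂ (hx₁.and hx₂)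
  refine ⟨x₁, x₂, y₁, y₂, hx, hy, ?_⟩
  rw [h₁₁, h₂₁, h₁₂, h₂₂]
  simp only [mul_mul_mul_comm, mul_comm (v y₁)]

end Density

lemma restrict_eq_measure_smul_cond {α : Type*} [MeasurableSpace α] {μ : Measure α} {s : Set α}
    (hs₀ : μ s ≠ 0) (hs : μ s ≠ ∞) : μ.restrict s = μ s • μ[|s] := by
  rw [ProbabilityTheory.cond, smul_smul, ENNReal.mul_inv_cancel hs₀ hs, one_smul]

lemma volume_restrict_Icc_prod_Icc {a b : ℝ} (ha : 0 < a) (hb : 0 < b) :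
    volume.restrict (Icc 0 a ×ˢ Icc 0 b) =
      ENNReal.ofReal (a * b) • (volume[|Icc 0 a]).prod (volume[|Icc 0 b]) := by
  rw [Measure.volume_eq_prod, ← Measure.prod_restrict,
    restrict_eq_measure_smul_cond (s := Icc 0 a) (by simp [ha]) (by simp),
    restrict_eq_measure_smul_cond (s := Icc 0 b) (by simp [hb]) (by simp),
    Measure.prod_smul_left, Measure.prod_smul_right, smul_smul, Real.volume_Icc, Real.volume_Icc,
    sub_zero, sub_zero, ENNReal.ofReal_mul ha.le]

section Ridge

variable {a b c α σ : ℝ}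

noncomputable def ridgeDensity (c α σ : ℝ) (p : ℝ × ℝ) : ℝ :=
  c * exp (-(p.1 - α * p.2) ^ 2 / (2 * σ ^ 2))

noncomputable def ridgeMeasure (a b c α σ : ℝ) : Measure (ℝ × ℝ) :=
  (volume.restrict (Icc 0 a ×ˢ Icc 0 b)).withDensity fun p ↦ ENNReal.ofReal (ridgeDensity c α σ p)

lemma ridgeDensity_le (hc : 0 ≤ c) (p : ℝ × ℝ) : ridgeDensity c α σ p ≤ c :=
  mul_le_of_le_one_right hc <| exp_le_one_iff.2 <|
    div_nonpos_of_nonpos_of_nonneg (neg_nonpos.2 (sq_nonneg _)) (by positivity)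

lemma le_ridgeDensity (hc : 0 ≤ c) (hα : 0 ≤ α) {p : ℝ × ℝ} (hp : p ∈ Icc 0 a ×ˢ Icc 0 b) :
    c * exp (-(a + α * b) ^ 2 / (2 * σ ^ 2)) ≤ ridgeDensity c α σ p := by
  obtain ⟨⟨hx₀, hxa⟩, hy₀, hyb⟩ := hp
  have hαy : α * p.2 ≤ α * b := mul_le_mul_of_nonneg_left hyb hα
  have hαy₀ : 0 ≤ α * p.2 := mul_nonneg hα hy₀
  have hsq : (p.1 - α * p.2) ^ 2 ≤ (a + α * b) ^ 2 := sq_le_sq' (by linarith) (by linarith)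
  unfold ridgeDensity
  gcongr c * exp (-?_ / _)

lemma ridgeDensity_mul_ridgeDensity (hσ : σ ≠ 0) (x₁ x₂ y₁ y₂ : ℝ) :
    ridgeDensity c α σ (x₁, y₁) * ridgeDensity c α σ (x₂, y₂) =
      ridgeDensity c α σ (x₁, y₂) * ridgeDensity c α σ (x₂, y₁) *
        exp (α * (x₁ - x₂) * (y₁ - y₂) / σ ^ 2) := by
  simp only [ridgeDensity]
  have hexp : -(x₁ - α * y₁) ^ 2 / (2 * σ ^ 2) + -(x₂ - α * y₂) ^ 2 / (2 * σ ^ 2) =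
      -(x₁ - α * y₂) ^ 2 / (2 * σ ^ 2) + -(x₂ - α * y₁) ^ 2 / (2 * σ ^ 2) +
        α * (x₁ - x₂) * (y₁ - y₂) / σ ^ 2 := by
    field_simp
    ring
  calc _ = c * c * exp (-(x₁ - α * y₁) ^ 2 / (2 * σ ^ 2) + -(x₂ - α * y₂) ^ 2 / (2 * σ ^ 2)) := by
        rw [exp_add]; ring
    _ = _ := by rw [hexp, exp_add, exp_add]; ring

lemma ofReal_ridgeDensity_cross_ne (hc : 0 < c) (hα : α ≠ 0) (hσ : σ ≠ 0) {x₁ x₂ y₁ y₂ : ℝ}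
    (hx : x₁ ≠ x₂) (hy : y₁ ≠ y₂) :
    ENNReal.ofReal (ridgeDensity c α σ (x₁, y₁)) * ENNReal.ofReal (ridgeDensity c α σ (x₂, y₂)) ≠
      ENNReal.ofReal (ridgeDensity c α σ (x₁, y₂)) *
        ENNReal.ofReal (ridgeDensity c α σ (x₂, y₁)) := by
  have hpos : ∀ p, 0 < ridgeDensity c α σ p := fun p ↦ by unfold ridgeDensity; positivity
  rw [← ENNReal.ofReal_mul (hpos _).le, ← ENNReal.ofReal_mul (hpos _).le,
    Ne, ENNReal.ofReal_eq_ofReal_iff (mul_pos (hpos _) (hpos _)).le (mul_pos (hpos _) (hpos _)).le,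
    ridgeDensity_mul_ridgeDensity hσ, mul_eq_left₀ (mul_pos (hpos _) (hpos _)).ne', exp_eq_one_iff]
  exact div_ne_zero (mul_ne_zero (mul_ne_zero hα (sub_ne_zero.2 hx)) (sub_ne_zero.2 hy))
    (pow_ne_zero 2 hσ)

lemma ridgeMeasure_le (ha : 0 < a) (hb : 0 < b) (hc : 0 ≤ c) :
    ridgeMeasure a b c α σ ≤
      ENNReal.ofReal (c * (a * b)) • (volume[|Icc 0 a]).prod (volume[|Icc 0 b]) :=
  calc ridgeMeasure a b c α σ
      ≤ (volume.restrict (Icc 0 a ×ˢ Icc 0 b)).withDensity fun _ ↦ ENNReal.ofReal c :=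
        withDensity_mono (ae_of_all _ fun p ↦ ENNReal.ofReal_le_ofReal (ridgeDensity_le hc p))
    _ = _ := by
      rw [withDensity_const, volume_restrict_Icc_prod_Icc ha hb, smul_smul, ENNReal.ofReal_mul hc]

lemma le_ridgeMeasure (ha : 0 < a) (hb : 0 < b) (hc : 0 ≤ c) (hα : 0 ≤ α) :
    ENNReal.ofReal (c * exp (-(a + α * b) ^ 2 / (2 * σ ^ 2)) * (a * b)) •
      (volume[|Icc 0 a]).prod (volume[|Icc 0 b]) ≤ ridgeMeasure a b c α σ :=
  calc _ = (volume.restrict (Icc 0 a ×ˢ Icc 0 b)).withDensity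
        fun _ ↦ ENNReal.ofReal (c * exp (-(a + α * b) ^ 2 / (2 * σ ^ 2))) := by
        rw [withDensity_const, volume_restrict_Icc_prod_Icc ha hb, smul_smul,
          ENNReal.ofReal_mul (by positivity)]
    _ ≤ ridgeMeasure a b c α σ :=
        withDensity_mono <| (ae_restrict_mem (measurableSet_Icc.prod measurableSet_Icc)).mono
          fun _ hp ↦ ENNReal.ofReal_le_ofReal (le_ridgeDensity hc hα hp)

lemma ridgeMeasure_ne_prod_map (ha : 0 < a) (hb : 0 < b) (hc : 0 < c) (hα : α ≠ 0)
    (hσ : σ ≠ 0) :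
    ridgeMeasure a b c α σ ≠
      ((ridgeMeasure a b c α σ).map Prod.fst).prod ((ridgeMeasure a b c α σ).map Prod.snd) := by
  intro h
  rw [ridgeMeasure, Measure.volume_eq_prod, ← Measure.prod_restrict] at h
  have hmeas : Measurable fun p ↦ ENNReal.ofReal (ridgeDensity c α σ p) := by
    unfold ridgeDensity; fun_prop
  obtain ⟨u, v, huv⟩ := exists_ae_eq_mul_of_withDensity_eq_prod_map hmeas h
  obtain ⟨x₁, x₂, y₁, y₂, hx, hy, hcross⟩ := exists_cross_eq_of_ae_eq_mul
    (by simp [ha]) (by simp [hb]) huv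
  exact ofReal_ridgeDensity_cross_ne hc hα hσ hx hy hcross

lemma mutualInfo_ridgeMeasure_pos_and_le (ha : 0 < a) (hb : 0 < b) (hc : 0 < c) (hα : 0 < α)
    (hσ : 0 < σ) [IsProbabilityMeasure (ridgeMeasure a b c α σ)] :
    0 < mutualInfo (ridgeMeasure a b c α σ) ∧
      mutualInfo (ridgeMeasure a b c α σ) ≤ (((a + α * b) ^ 2 / σ ^ 2 : ℝ) : EReal) := by
  have : IsProbabilityMeasure (volume[|Icc 0 a]) :=
    cond_isProbabilityMeasure_of_finite (by simp [ha]) (by simp)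
  have : IsProbabilityMeasure (volume[|Icc 0 b]) :=
    cond_isProbabilityMeasure_of_finite (by simp [hb]) (by simp)
  have := Measure.isProbabilityMeasure_map (μ := ridgeMeasure a b c α σ)
    measurable_fst.aemeasurable
  have := Measure.isProbabilityMeasure_map (μ := ridgeMeasure a b c α σ)
    measurable_snd.aemeasurable
  obtain ⟨hle, hge⟩ := le_smul_prod_map_and_prod_map_le_smul (by positivity)
    (le_ridgeMeasure (σ := σ) ha hb hc.le hα.le) (ridgeMeasure_le ha hb hc.le)
  have hlog : log ((c * (a * b) / (c * exp (-(a + α * b) ^ 2 / (2 * σ ^ 2)) * (a * b))) ^ 2) =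
      (a + α * b) ^ 2 / σ ^ 2 := by
    have hratio : c * (a * b) / (c * exp (-(a + α * b) ^ 2 / (2 * σ ^ 2)) * (a * b)) =
        exp ((a + α * b) ^ 2 / (2 * σ ^ 2)) := by
      rw [neg_div, exp_neg]
      field_simp
    rw [hratio, log_pow, log_exp]
    field_simp
    ring
  rw [← hlog]
  exact klDiv_pos_and_le_log_of_le_smul hle hge (ridgeMeasure_ne_prod_map ha hb hc hα.ne' hσ.ne')

end Ridge

/-- for `(C₁,C₂)` with joint density proportional to
`exp(−(c₁ − α c₂)²/(2σ²))` on `[0,a]×[0,b]`, `α = b/a > 0`, the mutual information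
`I(C₁;C₂)` is strictly positive for every finite `σ > 0`, and `I(C₁;C₂) → 0` as `σ → ∞`. -/
theorem mutualInfo_pos_and_tendsto_zero
    (a b : ℝ) (ha : 0 < a) (hb : 0 < b) (α : ℝ) (hα : α = b / a)
    (K : ℝ → ℝ) (hK : ∀ σ, 0 < K σ)
    (μ : ℝ → Measure (ℝ × ℝ))
    (hμ : ∀ σ, μ σ = (volume.restrict (Set.Icc 0 a ×ˢ Set.Icc 0 b)).withDensity
      (fun p => ENNReal.ofReal (K σ * Real.exp (-(p.1 - α * p.2) ^ 2 / (2 * σ ^ 2)))))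
    (hprob : ∀ σ, 0 < σ → IsProbabilityMeasure (μ σ)) :
    (∀ σ : ℝ, 0 < σ → 0 < mutualInfo (μ σ)) ∧
      Tendsto (fun σ => mutualInfo (μ σ)) atTop (nhds 0) := by
  have hα₀ : 0 < α := hα ▸ div_pos hb ha
  obtain rfl : μ = fun σ ↦ ridgeMeasure a b (K σ) α σ := funext hμ
  have key (σ : ℝ) (hσ : 0 < σ) :=
    have := hprob σ hσ
    mutualInfo_ridgeMeasure_pos_and_le ha hb (hK σ) hα₀ hσ
  refine ⟨fun σ hσ ↦ (key σ hσ).1, ?_⟩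
  have hbound : Tendsto (fun σ : ℝ ↦ (((a + α * b) ^ 2 / σ ^ 2 : ℝ) : EReal)) atTop (nhds 0) :=
    continuous_coe_real_ereal.tendsto 0 |>.comp <|
      tendsto_const_nhds.div_atTop (tendsto_pow_atTop two_ne_zero)
  exact tendsto_of_tendsto_of_tendsto_of_le_of_le' tendsto_const_nhds hbound
    (eventually_gt_atTop 0 |>.mono fun σ hσ ↦ (key σ hσ).1.le)
    (eventually_gt_atTop 0 |>.mono fun σ hσ ↦ (key σ hσ).2)
end

section
/- Let p(z) = ∏ᵢ p(zᵢ) be a factorized smooth positive density on ℝⁿ and suppose f: ℝⁿ → ℝⁿ is a diffeomorphism with σ-diagonal Jacobian everywhere (for a fixed permutation σ). Then the pullback density p_f(c) := p(f(c)) |det ∇f(c)| factorizes as a product of univariate functions of the cᵢ. -/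
open Function

lemma hasDerivAt_update' {n : ℕ} (c : Fin n → ℝ) (a : Fin n) (t : ℝ) :
    HasDerivAt (fun t => Function.update c a t) (Pi.single a 1) t := by
  have h : (fun t : ℝ => Function.update c a t)
      = fun t : ℝ => c + (t - c a) • (Pi.single a 1 : Fin n → ℝ) := by
    funext t j
    by_cases hj : j = a
    · subst hj; simp
    · simp [Function.update_apply, hj, Pi.single_apply, Ne.symm hj]
  rw [h]
  simpa using (((hasDerivAt_id t).sub_const (c a)).smul_const (Pi.single a 1 : Fin n → ℝ)).const_add c

lemma comp_hasDerivAt {n : ℕ} {f : (Fin n → ℝ) → (Fin n → ℝ)} (hf : ContDiff ℝ (⊤ : ℕ∞) f)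
    (c : Fin n → ℝ) (a i : Fin n) (t : ℝ) :
    HasDerivAt (fun t => f (Function.update c a t) i)
      (fderiv ℝ f (Function.update c a t) (Pi.single a 1) i) t := by
  have h1 : HasDerivAt (fun t => f (Function.update c a t))
      (fderiv ℝ f (Function.update c a t) (Pi.single a 1)) t :=
    ((hf.differentiable (by simp) _).hasFDerivAt).comp_hasDerivAt t (hasDerivAt_update' c a t)
  exact (hasDerivAt_pi.1 h1) i

lemma const_along {n : ℕ} {σ : Equiv.Perm (Fin n)} {f : (Fin n → ℝ) → (Fin n → ℝ)}
    (hf : ContDiff ℝ (⊤ : ℕ∞) f)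
    (hdiag : ∀ (c : Fin n → ℝ) (i j : Fin n), i ≠ σ j →
      fderiv ℝ f c (Pi.single j 1) i = 0)
    (i a : Fin n) (ha : a ≠ σ.symm i) (c : Fin n → ℝ) (x : ℝ) :
    f (Function.update c a x) i = f c i := by
  have hne : i ≠ σ a := by
    intro h; exact ha (by simp [h])
  have hcst : ∀ t s : ℝ, (fun t => f (Function.update c a t) i) t
      = (fun t => f (Function.update c a t) i) s := by
    intro t s
    have hdiff : Differentiable ℝ (fun t => f (Function.update c a t) i) :=
      fun u => (comp_hasDerivAt hf c a i u).differentiableAt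
    have hder : ∀ u, deriv (fun t => f (Function.update c a t) i) u = 0 := by
      intro u
      rw [(comp_hasDerivAt hf c a i u).deriv]
      exact hdiag _ _ _ hne
    exact is_const_of_deriv_eq_zero hdiff hder t s
  have := hcst x (c a)
  simpa [Function.update_eq_self] using this

lemma depends_only {n : ℕ} {σ : Equiv.Perm (Fin n)} {f : (Fin n → ℝ) → (Fin n → ℝ)}
    (hf : ContDiff ℝ (⊤ : ℕ∞) f)
    (hdiag : ∀ (c : Fin n → ℝ) (i j : Fin n), i ≠ σ j →
      fderiv ℝ f c (Pi.single j 1) i = 0)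
    (i : Fin n) (c c' : Fin n → ℝ) (h : c (σ.symm i) = c' (σ.symm i)) :
    f c i = f c' i := by
  have key : ∀ s : Finset (Fin n), ∀ c c' : Fin n → ℝ, c (σ.symm i) = c' (σ.symm i) →
      (∀ j ∉ s, c j = c' j) → f c i = f c' i := by
    intro s
    induction s using Finset.induction_on with
    | empty =>
      intro c c' _ hout
      congr 1
      funext j
      exact hout j (Finset.notMem_empty j)
    | @insert a s ha ih =>
      intro c c' hk hout
      by_cases hak : a = σ.symm i
      · -- then c a = c' a already, so c, c' agree outside s
        apply ih c c' hk
        intro j hj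
        by_cases hja : j = a
        · subst hja; rw [hak]; exact hk
        · exact hout j (by simp [hja, hj])
      · have step : f (Function.update c' a (c a)) i = f c' i :=
          const_along hf hdiag i a hak c' (c a)
        rw [← step]
        apply ih c (Function.update c' a (c a))
        · rw [Function.update_apply, if_neg (Ne.symm hak)]
          exact hk
        · intro j hj
          by_cases hja : j = a
          · subst hja; simp
          · rw [Function.update_apply, if_neg hja]
            exact hout j (by simp [hja, hj])
  exact key Finset.univ c c' h (fun j hj => absurd (Finset.mem_univ j) hj)


/-- if `p(z) = ∏ᵢ pᵢ(zᵢ)` is a factorized smooth positive density on `ℝⁿ`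
and `f` is a diffeomorphism whose Jacobian is σ-diagonal everywhere (for a fixed
permutation σ), then the pullback density `p_f(c) = p(f(c)) |det ∇f(c)|` factorizes as
a product of univariate functions of the `cᵢ`. -/
theorem pullback_density_factorizes {n : ℕ}
    (σ : Equiv.Perm (Fin n))
    (f : (Fin n → ℝ) → (Fin n → ℝ))
    (hf : ContDiff ℝ (⊤ : ℕ∞) f) (hbij : Function.Bijective f)
    (hinv : ContDiff ℝ (⊤ : ℕ∞) (Function.invFun f))
    (hdiag : ∀ (c : Fin n → ℝ) (i j : Fin n), i ≠ σ j →
      fderiv ℝ f c (Pi.single j 1) i = 0)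
    (p : Fin n → ℝ → ℝ) (hp_smooth : ∀ i, ContDiff ℝ (⊤ : ℕ∞) (p i)) (hp_pos : ∀ i x, 0 < p i x) :
    ∃ r : Fin n → ℝ → ℝ,
      ∀ c : Fin n → ℝ, (∏ i, p i (f c i)) * |(fderiv ℝ f c).det| = ∏ i, r i (c i) := by
  classical
  -- the univariate functions describing each coordinate of `f`
  set φ : Fin n → ℝ → ℝ := fun i x => f (Pi.single (σ.symm i) x) i with hφ
  have hφ_eq : ∀ (c : Fin n → ℝ) (i : Fin n), f c i = φ i (c (σ.symm i)) := by
    intro c i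
    exact depends_only hf hdiag i c (Pi.single (σ.symm i) (c (σ.symm i))) (by simp)
  -- derivative facts
  have hder : ∀ (c : Fin n → ℝ) (j : Fin n),
      HasDerivAt (φ (σ j)) (fderiv ℝ f c (Pi.single j 1) (σ j)) (c j) := by
    intro c j
    have h1 := comp_hasDerivAt hf c j (σ j) (c j)
    rw [Function.update_eq_self] at h1
    have h2 : (fun t => f (Function.update c j t) (σ j)) = φ (σ j) := by
      funext t
      rw [hφ_eq (Function.update c j t) (σ j)]
      have h3 : (Function.update c j t) (σ.symm (σ j)) = t := by
        rw [Equiv.symm_apply_apply, Function.update_self]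
      rw [h3]
    rwa [h2] at h1
  refine ⟨fun j x => p (σ j) (φ (σ j) x) * |deriv (φ (σ j)) x|, fun c => ?_⟩
  -- the Jacobian matrix
  set M : Matrix (Fin n) (Fin n) ℝ :=
    LinearMap.toMatrix' (fderiv ℝ f c : (Fin n → ℝ) →ₗ[ℝ] (Fin n → ℝ)) with hM
  have hMapp : ∀ i j, M i j = fderiv ℝ f c (Pi.single j 1) i := by
    intro i j
    rw [hM, LinearMap.toMatrix'_apply]
    have h1 : (fun j' : Fin n => if j' = j then (1:ℝ) else 0) = Pi.single j 1 := by
      funext k; simp [Pi.single_apply]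
    rfl
  have hdet : (fderiv ℝ f c).det = M.det := by
    rw [hM, LinearMap.det_toMatrix']
  set d : Fin n → ℝ := fun j => M (σ j) j with hd
  have hMform : M = (Matrix.diagonal d).submatrix (σ⁻¹ : Equiv.Perm (Fin n)) id := by
    ext i j
    rw [Matrix.submatrix_apply, Matrix.diagonal_apply, id]
    by_cases h : i = σ j
    · rw [if_pos (by simp [h])]
      subst h
      rw [Equiv.Perm.inv_def, Equiv.symm_apply_apply]
    · rw [if_neg (by intro hh; exact h (by simpa using congrArg σ hh))]
      rw [hMapp]
      exact hdiag c i j h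
  have hdetM : |M.det| = ∏ j, |d j| := by
    rw [hMform, Matrix.det_permute, Matrix.det_diagonal, abs_mul, Finset.abs_prod,
      abs_unit_intCast, one_mul]
  have hd_eq : ∀ j, d j = deriv (φ (σ j)) (c j) := by
    intro j
    show M (σ j) j = _
    rw [hMapp]
    exact ((hder c j).deriv).symm
  calc (∏ i, p i (f c i)) * |(fderiv ℝ f c).det|
      = (∏ j, p (σ j) (φ (σ j) (c j))) * ∏ j, |deriv (φ (σ j)) (c j)| := by
        rw [hdet, hdetM]
        congr 1
        · rw [← Equiv.prod_comp σ (fun i => p i (f c i))]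
          refine Finset.prod_congr rfl fun j _ => ?_
          rw [hφ_eq c (σ j)]
          simp
        · exact Finset.prod_congr rfl fun j _ => by rw [hd_eq]
    _ = ∏ j, p (σ j) (φ (σ j) (c j)) * |deriv (φ (σ j)) (c j)| := by
        rw [Finset.prod_mul_distrib]
end

section
/- Let f: ℝ² → ℝ² be a C¹ diffeomorphism. If the Jacobian of f is diagonal at every point (∂f₁/∂c₂ ≡ 0 and ∂f₂/∂c₁ ≡ 0), and Z = f(C) where C has a non-factorizing continuous positive density, then the density of Z does not factorize either. -/
/-!
A diagonal Jacobian makes each component of `f` constant in the other variable, so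
`f = Prod.map g₁ g₂`. Differentiating `f⁻¹ ∘ f = id` gives
`|det D(f⁻¹)(f c)| * |g₁' c₁| * |g₂' c₂| = 1`, and `f⁻¹` is differentiable, so it maps null sets to
null sets. Hence a factorization `pZ = q₁ ⊗ q₂` a.e. pulls back along `f` to the factorization
`pC c = (q₁ (g₁ c₁) * |g₁' c₁|) * (q₂ (g₂ c₂) * |g₂' c₂|)` a.e.
-/

open MeasureTheory Function

section

variable {E : Type*} [NormedAddCommGroup E] [NormedSpace ℝ E]

theorem apply_add_smul_eq_of_fderiv_apply_eq_zero {G : Type*} [NormedAddCommGroup G]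
    [NormedSpace ℝ G] {φ : E → G} (hφ : Differentiable ℝ φ) {v : E}
    (hv : ∀ x, fderiv ℝ φ x v = 0) (x : E) (t : ℝ) : φ (x + t • v) = φ x := by
  have hline : ∀ s : ℝ, HasDerivAt (fun s : ℝ => φ (x + s • v)) 0 s := fun s => by
    simpa [hv, comp_def] using
      (hφ _).hasFDerivAt.comp_hasDerivAt s (((hasDerivAt_id s).smul_const v).const_add x)
  simpa using is_const_of_deriv_eq_zero (fun s => (hline s).differentiableAt)
    (fun s => (hline s).deriv) t 0

theorem det_fderiv_mul_det_fderiv_of_leftInverse {f g : E → E} (hfg : LeftInverse g f)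
    {x : E} (hf : DifferentiableAt ℝ f x) (hg : DifferentiableAt ℝ g (f x)) :
    (fderiv ℝ g (f x)).det * (fderiv ℝ f x).det = 1 := by
  have hcomp := fderiv_comp x hg hf
  rw [show g ∘ f = id from funext hfg, fderiv_id] at hcomp
  calc (fderiv ℝ g (f x)).det * (fderiv ℝ f x).det
      = (fderiv ℝ g (f x) ∘L fderiv ℝ f x).det := (LinearMap.det_comp _ _).symm
    _ = 1 := by rw [← hcomp]; exact LinearMap.det_id

theorem ae_comp_of_leftInverse [FiniteDimensional ℝ E] [MeasurableSpace E] [BorelSpace E] {μ : Measure E}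
    [μ.IsAddHaarMeasure] {f g : E → E} (hfg : LeftInverse g f) (hg : Differentiable ℝ g)
    {P : E → Prop} (hP : ∀ᵐ z ∂μ, P z) : ∀ᵐ x ∂μ, P (f x) := by
  have himage := addHaar_image_eq_zero_of_differentiableOn_of_addHaar_eq_zero μ
    hg.differentiableOn (ae_iff.mp hP)
  have hsub : f ⁻¹' {z | ¬P z} ⊆ g '' {z | ¬P z} := fun x hx => ⟨f x, hx, hfg x⟩
  exact ae_iff.mpr (measure_mono_null hsub himage)

end

theorem exists_eq_prodMap_of_fderiv_offDiag_eq_zero {G H : Type*}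
    [NormedAddCommGroup G] [NormedSpace ℝ G] [NormedAddCommGroup H] [NormedSpace ℝ H]
    {f : ℝ × ℝ → G × H} (hf : Differentiable ℝ f)
    (h₁₂ : ∀ c, (fderiv ℝ f c (0, 1)).1 = 0) (h₂₁ : ∀ c, (fderiv ℝ f c (1, 0)).2 = 0) :
    ∃ g₁ : ℝ → G, ∃ g₂ : ℝ → H,
      Differentiable ℝ g₁ ∧ Differentiable ℝ g₂ ∧ f = Prod.map g₁ g₂ := by
  have hfst : ∀ c, fderiv ℝ (fun c => (f c).1) c (0, 1) = 0 := fun c => by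
    rw [(hf c).hasFDerivAt.fst.fderiv]; exact h₁₂ c
  have hsnd : ∀ c, fderiv ℝ (fun c => (f c).2) c (1, 0) = 0 := fun c => by
    rw [(hf c).hasFDerivAt.snd.fderiv]; exact h₂₁ c
  refine ⟨fun x => (f (x, 0)).1, fun y => (f (0, y)).2,
    (hf.comp (differentiable_id.prodMk (differentiable_const 0))).fst,
    (hf.comp ((differentiable_const 0).prodMk differentiable_id)).snd,
    funext fun c => Prod.ext ?_ ?_⟩
  · simpa using apply_add_smul_eq_of_fderiv_apply_eq_zero hf.fst hfst (c.1, 0) c.2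
  · simpa using apply_add_smul_eq_of_fderiv_apply_eq_zero hf.snd hsnd (0, c.2) c.1

theorem det_fderiv_prodMap {g₁ g₂ : ℝ → ℝ} {c : ℝ × ℝ}
    (hg₁ : DifferentiableAt ℝ g₁ c.1) (hg₂ : DifferentiableAt ℝ g₂ c.2) :
    (fderiv ℝ (Prod.map g₁ g₂) c).det = deriv g₁ c.1 * deriv g₂ c.2 := by
  rw [(hg₁.hasFDerivAt.prodMap c hg₂.hasFDerivAt).fderiv, ContinuousLinearMap.det,
    ContinuousLinearMap.coe_prodMap, LinearMap.det_prodMap,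
    LinearMap.det_ring, LinearMap.det_ring]
  simp only [ContinuousLinearMap.coe_coe, fderiv_apply_one_eq_deriv]

theorem image_density_not_factorized_general
    (f : ℝ × ℝ → ℝ × ℝ)
    (hf : ContDiff ℝ 1 f) (hbij : Function.Bijective f)
    (hinv : ContDiff ℝ 1 (Function.invFun f))
    (hdiag₁ : ∀ c : ℝ × ℝ, (fderiv ℝ f c (0, 1)).1 = 0)
    (hdiag₂ : ∀ c : ℝ × ℝ, (fderiv ℝ f c (1, 0)).2 = 0)
    (pC pZ : ℝ × ℝ → ℝ)
    (hchange : ∀ z : ℝ × ℝ,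
      pZ z = pC (Function.invFun f z) * |(fderiv ℝ (Function.invFun f) z).det|)
    (hnofact : ¬ ∃ q₁ q₂ : ℝ → ℝ, ∀ᵐ c : ℝ × ℝ ∂volume, pC c = q₁ c.1 * q₂ c.2) :
    ¬ ∃ q₁ q₂ : ℝ → ℝ, ∀ᵐ z : ℝ × ℝ ∂volume, pZ z = q₁ z.1 * q₂ z.2 := by
  rintro ⟨q₁, q₂, hq⟩
  have hleft : LeftInverse (invFun f) f := leftInverse_invFun hbij.1
  have hf_diff := hf.differentiable one_ne_zero
  have hinv_diff := hinv.differentiable one_ne_zero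
  obtain ⟨g₁, g₂, hg₁, hg₂, rfl⟩ :=
    exists_eq_prodMap_of_fderiv_offDiag_eq_zero hf_diff hdiag₁ hdiag₂
  refine hnofact ⟨fun x => q₁ (g₁ x) * |deriv g₁ x|, fun y => q₂ (g₂ y) * |deriv g₂ y|, ?_⟩
  filter_upwards [ae_comp_of_leftInverse hleft hinv_diff hq] with c hc
  have hdet := det_fderiv_mul_det_fderiv_of_leftInverse hleft (hf_diff c) (hinv_diff _)
  rw [det_fderiv_prodMap (hg₁ _) (hg₂ _)] at hdet
  have habs := congrArg abs hdet
  rw [hchange, hleft] at hc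
  simp only [Prod.map_fst, Prod.map_snd, abs_mul, abs_one] at hc habs ⊢
  calc pC c = pC c * (|(fderiv ℝ (invFun (Prod.map g₁ g₂)) (Prod.map g₁ g₂ c)).det| *
        (|deriv g₁ c.1| * |deriv g₂ c.2|)) := by rw [habs, mul_one]
    _ = _ := by rw [← mul_assoc, hc]; ring

/-- let `f : ℝ² → ℝ²` be a C¹ diffeomorphism with everywhere-diagonal
Jacobian (`∂f₁/∂c₂ ≡ 0` and `∂f₂/∂c₁ ≡ 0`), and let `Z = f(C)` where `C` has a continuous,
strictly positive density `pC` that does not factorize. Then the density of `Z`, obtained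
via the change-of-variables formula, does not factorize either. -/
theorem image_density_not_factorized
    (f : ℝ × ℝ → ℝ × ℝ)
    (hf : ContDiff ℝ 1 f) (hbij : Function.Bijective f)
    (hinv : ContDiff ℝ 1 (Function.invFun f))
    (hdiag₁ : ∀ c : ℝ × ℝ, (fderiv ℝ f c (0, 1)).1 = 0)
    (hdiag₂ : ∀ c : ℝ × ℝ, (fderiv ℝ f c (1, 0)).2 = 0)
    (pC pZ : ℝ × ℝ → ℝ)
    (hpC_cont : Continuous pC) (hpC_pos : ∀ c, 0 < pC c)
    (hchange : ∀ z : ℝ × ℝ,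
      pZ z = pC (Function.invFun f z) * |(fderiv ℝ (Function.invFun f) z).det|)
    (hnofact : ¬ ∃ q₁ q₂ : ℝ → ℝ, ∀ᵐ c : ℝ × ℝ ∂volume, pC c = q₁ c.1 * q₂ c.2) :
    ¬ ∃ q₁ q₂ : ℝ → ℝ, ∀ᵐ z : ℝ × ℝ ∂volume, pZ z = q₁ z.1 * q₂ z.2 :=
  image_density_not_factorized_general f hf hbij hinv hdiag₁ hdiag₂ pC pZ hchange hnofact
end
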